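/- Fix ν > 11/8 and K > 0. There exists ε₀ > 0 such that for every ε ∈ (0, ε₀] and every real a with |a − 2ε| ≤ K·ε^ν, the series Σ_{j=2}^∞ c_j converges, where c_j := ∏_{l=2}^{j} 1/( [1 + √(η·a) − (b_ε/√(η·a))/(2l − ξ)] · [1 + a − 2b_ε/(2l−1) − (1−c_ε)/(2l−1)²]^{1/2} ); in particular all factors are well defined and positive, and c_j/c_{j−1} < 1 for all sufficiently large j. -/

import Mathlib

/-- `b_ε := (1+ε)(1+√ε)·√(ε²+2ε)` -/
noncomputable def bEps (ε : ℝ) : ℝ := (1 + ε) * (1 + Real.sqrt ε) * Real.sqrt (ε ^ 2 + 2 * ε)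

/-- `c_ε := ((1+√ε)²−1)·(ε²+2ε)` -/
noncomputable def cEps (ε : ℝ) : ℝ := ((1 + Real.sqrt ε) ^ 2 - 1) * (ε ^ 2 + 2 * ε)

/-- The factor `[1 + √(η·a) − (b_ε/√(η·a))/(2l − ξ)] · [1 + a − 2b_ε/(2l−1) − (1−c_ε)/(2l−1)²]^{1/2}`,
with `η = 1−√ε` and `ξ = ε^Θ`, `Θ = min{2(ν−11/8), 1/4}`. -/
noncomputable def cFactor (ν ε a : ℝ) (l : ℕ) : ℝ :=
  (1 + Real.sqrt ((1 - Real.sqrt ε) * a)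
      - (bEps ε / Real.sqrt ((1 - Real.sqrt ε) * a))
          / (2 * (l : ℝ) - ε ^ (min (2 * (ν - 11/8)) (1/4))))
    * Real.sqrt (1 + a - 2 * bEps ε / (2 * (l : ℝ) - 1)
        - (1 - cEps ε) / (2 * (l : ℝ) - 1) ^ 2)

/-- `c_j := ∏_{l=2}^{j} (cFactor l)⁻¹`. -/
noncomputable def cTerm (ν ε a : ℝ) (j : ℕ) : ℝ :=
  ∏ l ∈ Finset.Icc 2 j, (cFactor ν ε a l)⁻¹

open Filter Real

set_option maxHeartbeats 1000000 in
theorem stmt14 (ν K : ℝ) (hν : 11/8 < ν) (hK : 0 < K) :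
    ∃ ε₀ > (0:ℝ), ∀ ε : ℝ, 0 < ε → ε ≤ ε₀ →
      ∀ a : ℝ, |a - 2 * ε| ≤ K * ε ^ ν →
      -- all factors are well defined and positive
      ((∀ l : ℕ, 2 ≤ l →
          0 < 1 + Real.sqrt ((1 - Real.sqrt ε) * a)
              - (bEps ε / Real.sqrt ((1 - Real.sqrt ε) * a))
                  / (2 * (l : ℝ) - ε ^ (min (2 * (ν - 11/8)) (1/4)))
          ∧ 0 < 1 + a - 2 * bEps ε / (2 * (l : ℝ) - 1)
              - (1 - cEps ε) / (2 * (l : ℝ) - 1) ^ 2)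
        -- the series `Σ_{j} c_j` converges
        ∧ Summable (fun j : ℕ => cTerm ν ε a j)
        -- the ratio `c_j/c_{j−1}` is `< 1` for sufficiently large `j`
        ∧ ∃ J : ℕ, ∀ j : ℕ, J ≤ j → cTerm ν ε a j / cTerm ν ε a (j - 1) < 1) := by
  have hν1 : (0:ℝ) < ν - 1 := by linarith
  refine ⟨min (1/100) (K⁻¹ ^ (ν-1)⁻¹), lt_min (by norm_num) (Real.rpow_pos_of_pos (inv_pos.mpr hK) _), ?_⟩
  intro ε hε hε₀ a ha
  set Θ := min (2 * (ν - 11/8)) (1/4 : ℝ) with hΘdef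
  have hΘpos : 0 < Θ := lt_min (by linarith) (by norm_num)
  have hε1 : ε ≤ 1/100 := le_trans hε₀ (min_le_left _ _)
  -- K * ε ^ ν ≤ ε
  have hKε : K * ε ^ ν ≤ ε := by
    have hεle : ε ≤ K⁻¹ ^ (ν-1)⁻¹ := le_trans hε₀ (min_le_right _ _)
    have h1 : ε ^ (ν-1) ≤ (K⁻¹ ^ (ν-1)⁻¹) ^ (ν-1) :=
      Real.rpow_le_rpow hε.le hεle (by linarith)
    have h2 : (K⁻¹ ^ (ν-1)⁻¹ : ℝ) ^ (ν-1) = K⁻¹ := by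
      rw [← Real.rpow_mul (le_of_lt (inv_pos.mpr hK)), inv_mul_cancel₀ (ne_of_gt hν1),
        Real.rpow_one]
    have h3 : ε ^ ν = ε ^ (ν - 1) * ε := by
      conv_lhs => rw [show ν = (ν - 1) + 1 by ring]
      rw [Real.rpow_add_one (ne_of_gt hε)]
    rw [h3]
    have h4 : ε ^ (ν - 1) ≤ K⁻¹ := h2 ▸ h1
    calc K * (ε ^ (ν-1) * ε) ≤ K * (K⁻¹ * ε) := by
          apply mul_le_mul_of_nonneg_left (mul_le_mul_of_nonneg_right h4 hε.le) hK.le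
      _ = ε := by field_simp
  have haK := abs_le.mp ha
  have ha_lb : ε ≤ a := by linarith [haK.1]
  have ha_ub : a ≤ 3 * ε := by linarith [haK.2]
  have hεs_nonneg : 0 ≤ Real.sqrt ε := Real.sqrt_nonneg ε
  have hεs_pos : 0 < Real.sqrt ε := Real.sqrt_pos.mpr hε
  have hεs : Real.sqrt ε ≤ 1/10 := by
    have : Real.sqrt ε ≤ Real.sqrt (1/100) := Real.sqrt_le_sqrt hε1
    rwa [show (1/100:ℝ) = (1/10)^2 by norm_num, Real.sqrt_sq (by norm_num)] at this
  have hεsq : Real.sqrt ε ^ 2 = ε := Real.sq_sqrt hε.le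
  set s := Real.sqrt ((1 - Real.sqrt ε) * a) with hsdef
  have hs_lb : (9/10) * Real.sqrt ε ≤ s := by
    rw [hsdef]
    rw [Real.le_sqrt (by positivity) (by nlinarith)]
    nlinarith
  have hs_pos : 0 < s := lt_of_lt_of_le (by positivity) hs_lb
  have hs_nonneg : 0 ≤ s := hs_pos.le
  -- bound on bEps
  have hb_nonneg : 0 ≤ bEps ε := by
    unfold bEps; positivity
  have hb : bEps ε ≤ (5/2) * Real.sqrt ε := by
    unfold bEps
    have h1 : Real.sqrt (ε ^ 2 + 2*ε) ≤ 2 * Real.sqrt ε := by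
      rw [show 2 * Real.sqrt ε = Real.sqrt (4 * ε) by
        rw [Real.sqrt_mul (by norm_num), show Real.sqrt 4 = 2 by
          rw [show (4:ℝ) = 2^2 by norm_num, Real.sqrt_sq (by norm_num)]]]
      apply Real.sqrt_le_sqrt; nlinarith
    have h2 : (1 + ε) * (1 + Real.sqrt ε) ≤ 5/4 := by nlinarith
    have h3 : 0 ≤ Real.sqrt (ε ^ 2 + 2*ε) := Real.sqrt_nonneg _
    nlinarith
  -- bound on cEps
  have hc0 : 0 ≤ cEps ε := by
    unfold cEps
    have h1 : (0:ℝ) ≤ (1 + Real.sqrt ε) ^ 2 - 1 := by nlinarith [hεs_nonneg]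
    have h2 : (0:ℝ) ≤ ε ^ 2 + 2 * ε := by positivity
    exact mul_nonneg h1 h2
  have hc1 : cEps ε ≤ 1 := by
    unfold cEps
    have h1 : (1 + Real.sqrt ε) ^ 2 - 1 ≤ 21/100 := by nlinarith [hεs, hεs_nonneg]
    have h1' : (0:ℝ) ≤ (1 + Real.sqrt ε) ^ 2 - 1 := by nlinarith [hεs_nonneg]
    have h2 : ε ^ 2 + 2 * ε ≤ 1 := by nlinarith [hε1, hε.le]
    have h2' : (0:ℝ) ≤ ε ^ 2 + 2 * ε := by positivity
    nlinarith
  -- bound on b/s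
  have hbs : bEps ε / s ≤ 25/9 := by
    rw [div_le_iff₀ hs_pos]; nlinarith
  have hbs_nonneg : 0 ≤ bEps ε / s := div_nonneg hb_nonneg hs_nonneg
  -- ξ bounds
  have hξpos : 0 < ε ^ Θ := Real.rpow_pos_of_pos hε _
  have hξ1 : ε ^ Θ ≤ 1 := Real.rpow_le_one hε.le (by linarith) hΘpos.le
  -- positivity of both components for l ≥ 2
  have hcomp : ∀ l : ℕ, 2 ≤ l →
      (2/27 ≤ 1 + s - (bEps ε / s) / (2 * (l:ℝ) - ε ^ Θ))
      ∧ (13/18 ≤ 1 + a - 2 * bEps ε / (2 * (l:ℝ) - 1)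
          - (1 - cEps ε) / (2 * (l:ℝ) - 1) ^ 2) := by
    intro l hl
    have hl2 : (2:ℝ) ≤ (l:ℝ) := by exact_mod_cast hl
    constructor
    · have hd : (3:ℝ) ≤ 2 * (l:ℝ) - ε ^ Θ := by linarith
      have : (bEps ε / s) / (2 * (l:ℝ) - ε ^ Θ) ≤ (25/9) / 3 :=
        div_le_div₀ (by norm_num) hbs (by norm_num) hd
      have h259 : ((25:ℝ)/9)/3 = 25/27 := by norm_num
      nlinarith
    · have hd : (3:ℝ) ≤ 2 * (l:ℝ) - 1 := by linarith
      have hd0 : (0:ℝ) < 2 * (l:ℝ) - 1 := by linarith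
      have h1 : 2 * bEps ε / (2 * (l:ℝ) - 1) ≤ 2 * bEps ε / 3 :=
        div_le_div_of_nonneg_left (by linarith) (by norm_num) hd
      have hb14 : bEps ε ≤ 1/4 := by nlinarith
      have h2 : (1 - cEps ε) / (2 * (l:ℝ) - 1) ^ 2 ≤ 1/9 := by
        rw [div_le_iff₀ (by positivity)]; nlinarith
      have ha0 : 0 ≤ a := le_trans hε.le ha_lb
      nlinarith
  have hfpos : ∀ l : ℕ, 2 ≤ l → 0 < cFactor ν ε a l := by
    intro l hl
    obtain ⟨h1, h2⟩ := hcomp l hl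
    unfold cFactor
    rw [← hΘdef, ← hsdef]
    have : 0 < Real.sqrt (1 + a - 2 * bEps ε / (2 * (l:ℝ) - 1)
        - (1 - cEps ε) / (2 * (l:ℝ) - 1) ^ 2) := Real.sqrt_pos.mpr (by linarith)
    nlinarith
  -- positivity of cTerm
  have hTpos : ∀ n : ℕ, 0 < cTerm ν ε a n := by
    intro n
    unfold cTerm
    apply Finset.prod_pos
    intro l hl
    exact inv_pos.mpr (hfpos l (Finset.mem_Icc.mp hl).1)
  -- the limit
  set L := (1 + s) * Real.sqrt (1 + a) with hLdef
  have hL1 : 1 < L := by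
    have h1 : 1 ≤ Real.sqrt (1 + a) := Real.one_le_sqrt.mpr (by linarith)
    nlinarith
  have htend : Tendsto (fun l : ℕ => cFactor ν ε a l) atTop (nhds L) := by
    have hnat : Tendsto (fun l : ℕ => (l:ℝ)) atTop atTop := tendsto_natCast_atTop_atTop
    have ht1 : Tendsto (fun l : ℕ => 2 * (l:ℝ) - ε ^ Θ) atTop atTop :=
      tendsto_atTop_add_const_right _ _ (hnat.const_mul_atTop (by norm_num))
    have ht2 : Tendsto (fun l : ℕ => 2 * (l:ℝ) - 1) atTop atTop :=
      tendsto_atTop_add_const_right _ _ (hnat.const_mul_atTop (by norm_num))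
    have ht3 : Tendsto (fun l : ℕ => (2 * (l:ℝ) - 1) ^ 2) atTop atTop :=
      Filter.Tendsto.congr (fun x => by ring) (ht2.atTop_mul_atTop₀ ht2)
    have hA : Tendsto (fun l : ℕ => (bEps ε / s) / (2 * (l:ℝ) - ε ^ Θ)) atTop (nhds 0) :=
      tendsto_const_nhds.div_atTop ht1
    have hB : Tendsto (fun l : ℕ => 2 * bEps ε / (2 * (l:ℝ) - 1)) atTop (nhds 0) :=
      tendsto_const_nhds.div_atTop ht2
    have hC : Tendsto (fun l : ℕ => (1 - cEps ε) / (2 * (l:ℝ) - 1) ^ 2) atTop (nhds 0) :=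
      tendsto_const_nhds.div_atTop ht3
    have hfirst : Tendsto (fun l : ℕ => 1 + s - (bEps ε / s) / (2 * (l:ℝ) - ε ^ Θ))
        atTop (nhds (1 + s)) := by
      simpa using hA.const_sub (1 + s)
    have hsecond : Tendsto (fun l : ℕ => Real.sqrt (1 + a - 2 * bEps ε / (2 * (l:ℝ) - 1)
        - (1 - cEps ε) / (2 * (l:ℝ) - 1) ^ 2)) atTop (nhds (Real.sqrt (1 + a))) := by
      apply Filter.Tendsto.sqrt
      simpa using (hB.const_sub (1 + a)).sub hC
    exact hfirst.mul hsecond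
  -- eventual lower bound on factors
  have hev : ∀ᶠ l in atTop, (1 + L)/2 < cFactor ν ε a l :=
    htend.eventually (eventually_gt_nhds (by linarith))
  obtain ⟨N, hN⟩ := eventually_atTop.mp hev
  have hhalf : 1 < (1 + L)/2 := by linarith
  refine ⟨?_, ?_, ?_⟩
  · intro l hl
    obtain ⟨h1, h2⟩ := hcomp l hl
    exact ⟨by linarith, by linarith⟩
  · apply summable_of_ratio_norm_eventually_le (r := ((1 + L)/2)⁻¹)
    · rw [inv_lt_one_iff₀]; right; exact hhalf
    · filter_upwards [eventually_ge_atTop (max N 2)] with n hn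
      have hn2 : 2 ≤ n := le_trans (le_max_right _ _) hn
      have hnN : N ≤ n + 1 := le_trans (le_trans (le_max_left _ _) hn) (Nat.le_succ n)
      have hstep : cTerm ν ε a (n+1) = cTerm ν ε a n * (cFactor ν ε a (n+1))⁻¹ := by
        unfold cTerm
        exact Finset.prod_Icc_succ_top (by omega) _
      have hfb := hN (n+1) hnN
      have hf1 : 0 < cFactor ν ε a (n+1) := lt_trans (by linarith) hfb
      rw [Real.norm_of_nonneg (hTpos _).le, Real.norm_of_nonneg (hTpos n).le, hstep,
        mul_comm ((1 + L)/2)⁻¹ _]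
      apply mul_le_mul_of_nonneg_left _ (hTpos n).le
      exact inv_anti₀ (by linarith) hfb.le
  · refine ⟨max N 3, ?_⟩
    intro j hj
    have hj3 : 3 ≤ j := le_trans (le_max_right _ _) hj
    have hjN : N ≤ j := le_trans (le_max_left _ _) hj
    obtain ⟨k, rfl⟩ : ∃ k, j = k + 1 := ⟨j - 1, by omega⟩
    have hk2 : 2 ≤ k := by omega
    have hstep : cTerm ν ε a (k+1) = cTerm ν ε a k * (cFactor ν ε a (k+1))⁻¹ := by
      unfold cTerm
      exact Finset.prod_Icc_succ_top (by omega) _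
    have hfb := hN (k+1) hjN
    have hf1 : 1 < cFactor ν ε a (k+1) := lt_trans hhalf hfb
    have hsub : (k + 1) - 1 = k := by omega
    rw [hsub, hstep, mul_comm, mul_div_assoc, div_self (hTpos k).ne']
    rw [mul_one]
    exact inv_lt_one_of_one_lt₀ hf1
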